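/- Let X = {x⁽¹⁾, x⁽²⁾}, let F = {f_1, f_2} with f_1(x) = 1{x = x⁽¹⁾} and f_2(x) = 1{x = x⁽²⁾}, and let D be the uniform distribution on {(x⁽¹⁾,1), (x⁽¹⁾,0), (x⁽²⁾,1)}. Then L(f_1) = 2/3 and L(f_2) = 1/3, and there is an absolute constant C > 0 such that for every δ ∈ (0,1), every bag size k ≥ 7, and every n ≥ C·log(1/δ), with probability at least 1−δ over n i.i.d. bags of size k from D, the empirical proportional square loss L̂_SQ(f) = (1/n)·Σ_{i=1}^n ((1/k)·Σ_{j=1}^k f(x_{i,j}) − α_i)² satisfies L̂_SQ(f_1) < L̂_SQ(f_2); consequently the unique minimizer of L̂_SQ over F is f_1, whose classification loss exceeds that of the best predictor in F by 1/3. -/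
import Mathlib


open MeasureTheory Finset
open scoped ENNReal NNReal

noncomputable section

namespace LLP

/-- Real value of a Boolean label/prediction (`0` or `1`). -/
def bval (b : Bool) : ℝ := if b then 1 else 0

/-- Label proportion `α` of a bag of `k` labeled examples. -/
def labelProp {X : Type*} {k : ℕ} (bag : Fin k → X × Bool) : ℝ :=
  (∑ j, bval (bag j).2) / (k : ℝ)

/-- Average prediction `(1/k)·Σ_j f(x_j)` of `f` on a bag. -/
def predProp {X : Type*} {k : ℕ} (f : X → Bool) (bag : Fin k → X × Bool) : ℝ :=
  (∑ j, bval (f (bag j).1)) / (k : ℝ)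

/-- Instance-level classification loss `L(f) = Pr_{(x,y)∼D}[f(x) ≠ y]`. -/
def err {X : Type*} [MeasurableSpace X] (D : Measure (X × Bool)) (f : X → Bool) : ℝ :=
  (D {p | f p.1 ≠ p.2}).toReal

/-- `S` is shattered by the Boolean-valued class `F`. -/
def Shatters {Z : Type*} (F : Set (Z → Bool)) (S : Finset Z) : Prop :=
  ∀ T ⊆ S, ∃ f ∈ F, ∀ z ∈ S, (f z = true ↔ z ∈ T)

/-- The VC dimension of `F` is at most `d`. -/
def VCDimLE {Z : Type*} (F : Set (Z → Bool)) (d : ℕ) : Prop :=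
  ∀ S : Finset Z, Shatters F S → S.card ≤ d

/-- Joint distribution of `n` i.i.d. bags, each consisting of `k` i.i.d. draws from `D`. -/
def bagMeasure {X : Type*} [MeasurableSpace X] (D : Measure (X × Bool)) (n k : ℕ) :
    Measure (Fin n → Fin k → X × Bool) :=
  Measure.pi fun _ => Measure.pi fun _ => D

/-- Empirical proportional (0-1) risk: fraction of bags whose predicted proportion
mismatches the observed label proportion. -/
def empPM {X : Type*} {n k : ℕ} (f : X → Bool) (ω : Fin n → Fin k → X × Bool) : ℝ :=
  (∑ i, if predProp f (ω i) = labelProp (ω i) then (0 : ℝ) else 1) / (n : ℝ)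

/-- Empirical proportional square loss. -/
def empSQ {X : Type*} {n k : ℕ} (f : X → Bool) (ω : Fin n → Fin k → X × Bool) : ℝ :=
  (∑ i, (predProp f (ω i) - labelProp (ω i)) ^ 2) / (n : ℝ)

/-- The EasyLLP estimate of the 0-1 loss on a single bag, using marginal label
proportion `p`. -/
def ellEZ {X : Type*} {k : ℕ} (p : ℝ) (f : X → Bool) (bag : Fin k → X × Bool) : ℝ :=
  ((k : ℝ) * (labelProp bag - p) + p) * (1 - predProp f bag)
    + ((k : ℝ) * (p - labelProp bag) + (1 - p)) * predProp f bag

/-- Marginal label proportion `p = Pr[y = 1]`. -/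
def labelP {X : Type*} [MeasurableSpace X] (D : Measure (X × Bool)) : ℝ :=
  (D {q | q.2 = true}).toReal

end LLP

namespace LLP

/-- The two-point instance space `{x⁽¹⁾, x⁽²⁾}`, encoded as `Fin 2` (`0 = x⁽¹⁾`). -/
def X1 : Type := Fin 2

instance : MeasurableSpace (Fin 2 × Bool) := by infer_instance

/-- `f_1(x) = 1{x = x⁽¹⁾}`. -/
def f1 : Fin 2 → Bool := fun x => decide (x = 0)

/-- `f_2(x) = 1{x = x⁽²⁾}`. -/
def f2 : Fin 2 → Bool := fun x => decide (x = 1)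

/-- The uniform distribution on `{(x⁽¹⁾,1), (x⁽¹⁾,0), (x⁽²⁾,1)}`. -/
def D1 : Measure (Fin 2 × Bool) :=
  (PMF.uniformOfFinset ({(0, true), (0, false), (1, true)} : Finset (Fin 2 × Bool))
    (by decide)).toMeasure

def pw (a : Fin 2 × Bool) : ℝ := (D1 {a}).toReal

lemma pw_def (a : Fin 2 × Bool) : pw a = if a = ((1:Fin 2), false) then 0 else 1/3 := by
  have hmem : ∀ b : Fin 2 × Bool, b ≠ ((1:Fin 2), false) →
      b ∈ ({(0, true), (0, false), (1, true)} : Finset (Fin 2 × Bool)) := by decide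
  have hnmem : ((1:Fin 2), false) ∉
      ({(0, true), (0, false), (1, true)} : Finset (Fin 2 × Bool)) := by decide
  have hcard : ({(0, true), (0, false), (1, true)} : Finset (Fin 2 × Bool)).card = 3 := by decide
  rw [pw, D1, PMF.toMeasure_apply_singleton _ _ (measurableSet_singleton a),
    PMF.uniformOfFinset_apply]
  by_cases h : a = ((1:Fin 2), false)
  · subst h; simp [hnmem]
  · simp only [hmem a h, hcard, h, if_true, if_false]
    norm_num [ENNReal.toReal_inv]

lemma pw_nonneg (a : Fin 2 × Bool) : 0 ≤ pw a := ENNReal.toReal_nonneg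

def aa (z : Fin 2 × Bool) : ℝ := bval (f2 z.1) - bval (f1 z.1)
def cc (z : Fin 2 × Bool) : ℝ := 1 - 2 * bval z.2

lemma sum_pw : ∑ a : Fin 2 × Bool, pw a = 1 := by
  rw [Fintype.sum_prod_type]
  simp [Fin.sum_univ_two, pw_def]
  norm_num

lemma sum_pw_aa : ∑ a : Fin 2 × Bool, pw a * aa a = -(1/3) := by
  rw [Fintype.sum_prod_type]
  norm_num [Fin.sum_univ_two, pw_def, aa, f1, f2, bval]

lemma sum_pw_cc : ∑ a : Fin 2 × Bool, pw a * cc a = -(1/3) := by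
  rw [Fintype.sum_prod_type]
  simp [Fin.sum_univ_two, pw_def, cc, bval]
  norm_num

lemma sum_pw_aacc : ∑ a : Fin 2 × Bool, pw a * (aa a * cc a) = -(1/3) := by
  rw [Fintype.sum_prod_type]
  simp [Fin.sum_univ_two, pw_def, aa, cc, f1, f2, bval]
  norm_num

def Zb {k : ℕ} (b : Fin k → Fin 2 × Bool) : ℝ :=
  (predProp f2 b - labelProp b) ^ 2 - (predProp f1 b - labelProp b) ^ 2

def W {k : ℕ} (b : Fin k → Fin 2 × Bool) : ℝ := ∏ j, pw (b j)

lemma W_nonneg {k : ℕ} (b : Fin k → Fin 2 × Bool) : 0 ≤ W b :=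
  Finset.prod_nonneg fun j _ => pw_nonneg _

lemma bval_f1_add_f2 (x : Fin 2) : bval (f1 x) + bval (f2 x) = 1 := by
  fin_cases x <;> simp [f1, f2, bval]

lemma Zb_eq {k : ℕ} (hk : (k:ℝ) ≠ 0) (b : Fin k → Fin 2 × Bool) :
    Zb b = ((∑ j, aa (b j)) * (∑ j, cc (b j))) / (k:ℝ)^2 := by
  have hsum2 : (∑ j, bval (f2 (b j).1)) = (k:ℝ) - ∑ j, bval (f1 (b j).1) := by
    have : ∑ j : Fin k, (bval (f1 (b j).1) + bval (f2 (b j).1)) = (k:ℝ) := by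
      simp [bval_f1_add_f2]
    rw [Finset.sum_add_distrib] at this
    linarith
  have haa : (∑ j, aa (b j)) = (k:ℝ) - 2 * ∑ j, bval (f1 (b j).1) := by
    simp only [aa, Finset.sum_sub_distrib, hsum2]; ring
  have hcc : (∑ j, cc (b j)) = (k:ℝ) - 2 * ∑ j, bval ((b j).2) := by
    simp only [cc, Finset.sum_sub_distrib, ← Finset.mul_sum]
    simp
  rw [Zb, predProp, predProp, labelProp, hsum2, haa, hcc]
  field_simp
  ring

lemma bval_mem (b : Bool) : 0 ≤ bval b ∧ bval b ≤ 1 := by cases b <;> norm_num [bval]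

lemma prop_mem {k : ℕ} (hk : k ≠ 0) (g : Fin k → ℝ) (hg : ∀ j, 0 ≤ g j ∧ g j ≤ 1) :
    0 ≤ (∑ j, g j) / (k:ℝ) ∧ (∑ j, g j) / (k:ℝ) ≤ 1 := by
  have hkpos : (0:ℝ) < k := by positivity
  constructor
  · apply div_nonneg _ hkpos.le
    exact Finset.sum_nonneg fun j _ => (hg j).1
  · rw [div_le_one hkpos]
    calc (∑ j, g j) ≤ ∑ _j : Fin k, (1:ℝ) := Finset.sum_le_sum fun j _ => (hg j).2
    _ = k := by simp

lemma Zb_abs {k : ℕ} (hk : k ≠ 0) (b : Fin k → Fin 2 × Bool) :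
    -1 ≤ Zb b ∧ Zb b ≤ 1 := by
  obtain ⟨h1, h2⟩ := prop_mem hk (fun j => bval (f1 (b j).1)) (fun j => bval_mem _)
  obtain ⟨h3, h4⟩ := prop_mem hk (fun j => bval (f2 (b j).1)) (fun j => bval_mem _)
  obtain ⟨h5, h6⟩ := prop_mem hk (fun j => bval ((b j).2)) (fun j => bval_mem _)
  rw [Zb, predProp, predProp, labelProp]
  constructor <;> nlinarith [sq_nonneg ((∑ j, bval (f2 (b j).1))/(k:ℝ) - (∑ j, bval ((b j).2))/(k:ℝ)), sq_nonneg ((∑ j, bval (f1 (b j).1))/(k:ℝ) - (∑ j, bval ((b j).2))/(k:ℝ))]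

lemma sum_W {k : ℕ} : ∑ b : Fin k → Fin 2 × Bool, W b = 1 := by
  have h := Fintype.prod_sum (fun (_ : Fin k) (x : Fin 2 × Bool) => pw x)
  simp only [W]
  rw [← h, sum_pw]
  simp

lemma factor_jl {k : ℕ} (j l : Fin k) :
    ∑ b : Fin k → Fin 2 × Bool, W b * (aa (b j) * cc (b l)) =
      if j = l then -(1/3) else 1/9 := by
  classical
  set φ : Fin k → (Fin 2 × Bool) → ℝ :=
    fun m x => pw x * ((if j = m then aa x else 1) * (if l = m then cc x else 1)) with hφ
  have step1 : ∀ b : Fin k → Fin 2 × Bool,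
      W b * (aa (b j) * cc (b l)) = ∏ m, φ m (b m) := by
    intro b
    simp only [hφ]
    rw [Finset.prod_mul_distrib, Finset.prod_mul_distrib]
    rw [Finset.prod_ite_eq, Finset.prod_ite_eq]
    simp [W]
  have step2 : ∑ b : Fin k → Fin 2 × Bool, ∏ m, φ m (b m) = ∏ m, ∑ x, φ m x :=
    (Fintype.prod_sum φ).symm
  rw [show (∑ b : Fin k → Fin 2 × Bool, W b * (aa (b j) * cc (b l)))
      = ∑ b : Fin k → Fin 2 × Bool, ∏ m, φ m (b m) from Finset.sum_congr rfl fun b _ => step1 b,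
    step2]
  have hsum : ∀ m, ∑ x, φ m x =
      (if j = m then -(1/3:ℝ) else 1) * (if l = m then -(1/3:ℝ) else 1)
      ∨ (j = m ∧ l = m) := by
    intro m
    by_cases h1 : j = m <;> by_cases h2 : l = m
    · exact Or.inr ⟨h1, h2⟩
    · left
      simp only [hφ, if_pos h1, if_neg h2, mul_one]
      rw [sum_pw_aa]
    · left
      simp only [hφ, if_neg h1, if_pos h2, one_mul]
      rw [sum_pw_cc]
    · left
      simp only [hφ, if_neg h1, if_neg h2, mul_one]
      rw [sum_pw]
  by_cases hjl : j = l
  · subst hjl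
    have hthis : ∀ m, ∑ x, φ m x = if j = m then -(1/3:ℝ) else 1 := by
      intro m
      by_cases h1 : j = m
      · simp only [hφ, if_pos h1]
        rw [sum_pw_aacc]
      · rcases hsum m with h | ⟨h', _⟩
        · rw [h]; simp [h1]
        · exact absurd h' h1
    rw [Finset.prod_congr rfl fun m _ => hthis m, Finset.prod_ite_eq]
    simp
  · have hthis : ∀ m, ∑ x, φ m x =
        (if j = m then -(1/3:ℝ) else 1) * (if l = m then -(1/3:ℝ) else 1) := by
      intro m
      rcases hsum m with h | ⟨h1, h2⟩
      · exact h
      · exact absurd (h1.trans h2.symm) hjl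
    rw [Finset.prod_congr rfl fun m _ => hthis m, Finset.prod_mul_distrib,
      Finset.prod_ite_eq, Finset.prod_ite_eq]
    simp [hjl]
    norm_num

lemma mean_Zb {k : ℕ} (hk : 1 ≤ k) :
    ∑ b : Fin k → Fin 2 × Bool, W b * Zb b = ((k:ℝ) - 4) / (9 * k) := by
  have hk0 : (k:ℝ) ≠ 0 := by
    have : (0:ℝ) < k := by exact_mod_cast hk.trans_lt' (by norm_num)
    exact this.ne'
  have h1 : ∀ b : Fin k → Fin 2 × Bool,
      W b * Zb b = (∑ j, ∑ l, W b * (aa (b j) * cc (b l))) / (k:ℝ)^2 := by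
    intro b
    rw [Zb_eq hk0 b, Finset.sum_mul_sum, ← mul_div_assoc]
    congr 1
    rw [Finset.mul_sum]
    exact Finset.sum_congr rfl fun j _ => by rw [Finset.mul_sum]
  rw [Finset.sum_congr rfl fun b _ => h1 b, ← Finset.sum_div]
  rw [Finset.sum_comm]
  have h2 : ∀ j : Fin k, ∑ b : Fin k → Fin 2 × Bool, ∑ l, W b * (aa (b j) * cc (b l))
      = (k:ℝ)/9 - 4/9 := by
    intro j
    rw [Finset.sum_comm]
    have h3 : ∀ l : Fin k, ∑ b : Fin k → Fin 2 × Bool, W b * (aa (b j) * cc (b l))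
        = (1/9 : ℝ) + if j = l then (-(1/3) - 1/9) else 0 := by
      intro l
      rw [factor_jl]
      by_cases h : j = l <;> simp [h] <;> norm_num
    rw [Finset.sum_congr rfl fun l _ => h3 l, Finset.sum_add_distrib, Finset.sum_ite_eq]
    simp
    ring
  rw [Finset.sum_congr rfl fun j _ => h2 j, Finset.sum_const, card_univ]
  simp only [Fintype.card_fin, nsmul_eq_mul]
  field_simp

lemma mu_bounds {k : ℕ} (hk : 7 ≤ k) :
    1/21 ≤ ((k:ℝ) - 4) / (9 * k) ∧ ((k:ℝ) - 4) / (9 * k) ≤ 1/9 := by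
  have hk' : (7:ℝ) ≤ k := by exact_mod_cast hk
  have hkpos : (0:ℝ) < 9 * k := by linarith
  constructor
  · rw [le_div_iff₀ hkpos]; linarith
  · rw [div_le_iff₀ hkpos]; linarith

lemma chord (z t : ℝ) (hz : -1 ≤ z) (hz' : z ≤ 1) :
    Real.exp (-(t * z)) ≤ (1 - z)/2 * Real.exp t + (1 + z)/2 * Real.exp (-t) := by
  have h := convexOn_exp.2 (Set.mem_univ t) (Set.mem_univ (-t))
    (show (0:ℝ) ≤ (1 - z)/2 by linarith) (show (0:ℝ) ≤ (1 + z)/2 by linarith)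
    (by ring)
  simp only [smul_eq_mul] at h
  have harg : (1 - z) / 2 * t + (1 + z) / 2 * -t = -(t * z) := by ring
  rwa [harg] at h

lemma mgf_bag {k : ℕ} (hk : 7 ≤ k) :
    ∑ b : Fin k → Fin 2 × Bool, W b * Real.exp (-(1/63 * Zb b)) ≤ 1 - 1/2646 := by
  have hk1 : 1 ≤ k := le_trans (by norm_num) hk
  have hk0 : k ≠ 0 := by omega
  set E1 := Real.exp (1/63) with hE1def
  set E2 := Real.exp (-(1/63)) with hE2def
  have step : ∑ b : Fin k → Fin 2 × Bool, W b * Real.exp (-(1/63 * Zb b)) ≤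
      ∑ b : Fin k → Fin 2 × Bool, W b * ((1 - Zb b)/2 * E1 + (1 + Zb b)/2 * E2) := by
    apply Finset.sum_le_sum; intro b _
    exact mul_le_mul_of_nonneg_left
      (chord _ _ (Zb_abs hk0 b).1 (Zb_abs hk0 b).2) (W_nonneg b)
  set μ : ℝ := ((k:ℝ) - 4) / (9 * k) with hμdef
  have expand : ∑ b : Fin k → Fin 2 × Bool, W b * ((1 - Zb b)/2 * E1 + (1 + Zb b)/2 * E2)
      = (1 - μ)/2 * E1 + (1 + μ)/2 * E2 := by
    calc ∑ b : Fin k → Fin 2 × Bool, W b * ((1 - Zb b)/2 * E1 + (1 + Zb b)/2 * E2)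
        = ∑ b : Fin k → Fin 2 × Bool,
          (E1/2 * W b - E1/2 * (W b * Zb b) + (E2/2 * W b + E2/2 * (W b * Zb b))) :=
          Finset.sum_congr rfl fun b _ => by ring
      _ = E1/2 * (∑ b : Fin k → Fin 2 × Bool, W b)
            - E1/2 * (∑ b : Fin k → Fin 2 × Bool, W b * Zb b)
            + (E2/2 * (∑ b : Fin k → Fin 2 × Bool, W b)
            + E2/2 * (∑ b : Fin k → Fin 2 × Bool, W b * Zb b)) := by
          simp only [Finset.sum_add_distrib, Finset.sum_sub_distrib, ← Finset.mul_sum]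
      _ = (1 - μ)/2 * E1 + (1 + μ)/2 * E2 := by
          rw [sum_W, mean_Zb hk1, ← hμdef]; ring
  have hμ := mu_bounds hk
  rw [← hμdef] at hμ
  have hexp1 : (1:ℝ) + 1/63 ≤ E1 := by
    have := Real.add_one_le_exp (1/63 : ℝ); rw [hE1def]; linarith
  have hexp2 : (1:ℝ) - 1/63 ≤ E2 := by
    have := Real.add_one_le_exp (-(1/63) : ℝ); rw [hE2def]; linarith
  have hprod : E1 * E2 = 1 := by
    rw [hE1def, hE2def, ← Real.exp_add]; norm_num
  have hE1pos : 0 < E1 := Real.exp_pos _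
  have hE2pos : 0 < E2 := Real.exp_pos _
  have hE1ub : E1 ≤ 1/(1 - 1/63) := by
    rw [le_div_iff₀ (by norm_num : (0:ℝ) < 1 - 1/63)]
    nlinarith
  have hE2ub : E2 ≤ 1/(1 + 1/63) := by
    rw [le_div_iff₀ (by norm_num : (0:ℝ) < 1 + 1/63)]
    nlinarith
  have hc1 : (0:ℝ) ≤ (1 - μ)/2 := by linarith [hμ.2]
  have hc2 : (0:ℝ) ≤ (1 + μ)/2 := by linarith [hμ.1]
  have final : (1 - μ)/2 * E1 + (1 + μ)/2 * E2 ≤ 1 - 1/2646 := by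
    have b1 : (1 - μ)/2 * E1 ≤ (1 - μ)/2 * (1/(1 - 1/63)) :=
      mul_le_mul_of_nonneg_left hE1ub hc1
    have b2 : (1 + μ)/2 * E2 ≤ (1 + μ)/2 * (1/(1 + 1/63)) :=
      mul_le_mul_of_nonneg_left hE2ub hc2
    have hμ1 := hμ.1
    have e1 : (1:ℝ)/(1 - 1/63) = 63/62 := by norm_num
    have e2 : (1:ℝ)/(1 + 1/63) = 63/64 := by norm_num
    rw [e1] at b1; rw [e2] at b2
    linarith
  linarith [step, expand.le, expand.ge, final]

set_option maxHeartbeats 1000000 in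
lemma chernoff {n k : ℕ} (hk : 7 ≤ k) :
    ∑ ω ∈ Finset.univ.filter
        (fun ω : Fin n → Fin k → Fin 2 × Bool => ∑ i, Zb (ω i) ≤ 0),
      ∏ i, W (ω i) ≤ (1 - 1/2646 : ℝ)^n := by
  classical
  have hk0 : k ≠ 0 := by omega
  have h1 : ∀ ω ∈ Finset.univ.filter
      (fun ω : Fin n → Fin k → Fin 2 × Bool => ∑ i, Zb (ω i) ≤ 0),
      ∏ i, W (ω i) ≤ ∏ i, (W (ω i) * Real.exp (-(1/63 * Zb (ω i)))) := by
    intro ω hω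
    have hω' : ∑ i, Zb (ω i) ≤ 0 := (Finset.mem_filter.mp hω).2
    have heq : ∏ i, (W (ω i) * Real.exp (-(1/63 * Zb (ω i))))
        = (∏ i, W (ω i)) * Real.exp (-(1/63 * ∑ i, Zb (ω i))) := by
      rw [Finset.prod_mul_distrib, ← Real.exp_sum]
      congr 1
      rw [Finset.mul_sum, ← Finset.sum_neg_distrib]
    rw [heq]
    have hexp : 1 ≤ Real.exp (-(1/63 * ∑ i, Zb (ω i))) := by
      apply Real.one_le_exp; nlinarith
    nlinarith [Finset.prod_nonneg (fun i (_ : i ∈ Finset.univ) => W_nonneg (ω i)), hexp]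
  calc ∑ ω ∈ Finset.univ.filter
        (fun ω : Fin n → Fin k → Fin 2 × Bool => ∑ i, Zb (ω i) ≤ 0), ∏ i, W (ω i)
      ≤ ∑ ω ∈ Finset.univ.filter
        (fun ω : Fin n → Fin k → Fin 2 × Bool => ∑ i, Zb (ω i) ≤ 0),
          ∏ i, (W (ω i) * Real.exp (-(1/63 * Zb (ω i)))) := Finset.sum_le_sum h1
    _ ≤ ∑ ω : Fin n → Fin k → Fin 2 × Bool,
          ∏ i, (W (ω i) * Real.exp (-(1/63 * Zb (ω i)))) :=
        Finset.sum_le_sum_of_subset_of_nonneg (Finset.filter_subset _ _)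
          (fun ω _ _ => Finset.prod_nonneg fun i _ =>
            mul_nonneg (W_nonneg _) (Real.exp_pos _).le)
    _ = (∑ b : Fin k → Fin 2 × Bool, W b * Real.exp (-(1/63 * Zb b)))^n :=
        (Fintype.sum_pow (fun b : Fin k → Fin 2 × Bool => W b * Real.exp (-(1/63 * Zb b))) n).symm
    _ ≤ (1 - 1/2646 : ℝ)^n := by
        apply pow_le_pow_left₀ _ (mgf_bag hk)
        exact Finset.sum_nonneg fun b _ =>
          mul_nonneg (W_nonneg _) (Real.exp_pos _).le

instance : IsProbabilityMeasure D1 := PMF.toMeasure.isProbabilityMeasure _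

instance (k : ℕ) : IsProbabilityMeasure (Measure.pi fun _ : Fin k => D1) :=
  inferInstance

instance (n k : ℕ) : IsProbabilityMeasure (bagMeasure D1 n k) := by
  rw [bagMeasure]; infer_instance

lemma meas_finset {Ω : Type*} [MeasurableSpace Ω] [MeasurableSingletonClass Ω]
    (μ : Measure Ω) (F : Finset Ω) : μ ↑F = ∑ ω ∈ F, μ {ω} := by
  have h : (↑F : Set Ω) = ⋃ ω ∈ F, {ω} := by ext x; simp
  rw [h, measure_biUnion_finset]
  · intro a _ b _ hab
    simp [Set.disjoint_singleton, hab]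
  · intro b _; exact measurableSet_singleton b

lemma bag_singleton {n k : ℕ} (ω : Fin n → Fin k → Fin 2 × Bool) :
    ((bagMeasure D1 n k) {ω}).toReal = ∏ i, W (ω i) := by
  rw [bagMeasure, ← Set.univ_pi_singleton ω, Measure.pi_pi]
  rw [ENNReal.toReal_prod]
  refine Finset.prod_congr rfl fun i _ => ?_
  rw [← Set.univ_pi_singleton (ω i), Measure.pi_pi, ENNReal.toReal_prod]
  rfl

lemma bag_set_toReal {n k : ℕ} (S : Set (Fin n → Fin k → Fin 2 × Bool)) :
    ((bagMeasure D1 n k) S).toReal = ∑ ω ∈ S.toFinite.toFinset, ∏ i, W (ω i) := by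
  rw [show S = (↑S.toFinite.toFinset : Set _) by simp, meas_finset]
  rw [ENNReal.toReal_sum (fun ω _ => measure_ne_top _ _)]
  rw [show (↑(S.toFinite.toFinset) : Set _).toFinite.toFinset = S.toFinite.toFinset by simp]
  exact Finset.sum_congr rfl fun ω _ => bag_singleton ω

lemma D1_finset (F : Finset (Fin 2 × Bool)) : (D1 ↑F).toReal = ∑ x ∈ F, pw x := by
  rw [meas_finset, ENNReal.toReal_sum (fun x _ => measure_ne_top _ _)]
  rfl

lemma err_f1 : err D1 f1 = 2/3 := by
  have hset : {p : Fin 2 × Bool | f1 p.1 ≠ p.2}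
      = (↑({((0:Fin 2), false), ((1:Fin 2), true)} : Finset (Fin 2 × Bool)) : Set _) := by
    ext ⟨x, y⟩
    fin_cases x <;> cases y <;> simp [f1] <;> decide
  rw [err, hset, D1_finset]
  rw [Finset.sum_insert (by decide), Finset.sum_singleton]
  rw [pw_def, pw_def]
  norm_num

lemma err_f2 : err D1 f2 = 1/3 := by
  have hset : {p : Fin 2 × Bool | f2 p.1 ≠ p.2}
      = (↑({((0:Fin 2), true), ((1:Fin 2), false)} : Finset (Fin 2 × Bool)) : Set _) := by
    ext ⟨x, y⟩
    fin_cases x <;> cases y <;> simp [f2] <;> decide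
  rw [err, hset, D1_finset]
  rw [Finset.sum_insert (by decide), Finset.sum_singleton]
  rw [pw_def, pw_def]
  norm_num


/-- Proposition 1, proportional square loss fails in the agnostic
setting: `L(f₁) = 2/3`, `L(f₂) = 1/3`, and there is an absolute constant `C > 0` such
that for all `δ ∈ (0,1)`, bag size `k ≥ 7`, and `n ≥ C·log(1/δ)`, with probability at
least `1 − δ` over `n` i.i.d. bags of size `k` from `D1`, the empirical proportional
square loss of `f₁` is strictly smaller than that of `f₂`; consequently the unique
empirical proportional square loss minimizer over `F = {f₁, f₂}` is `f₁`, whose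
classification loss exceeds that of the best predictor in `F` by `1/3`. -/
theorem prop_square_loss_fails :
    err D1 f1 = 2 / 3 ∧ err D1 f2 = 1 / 3 ∧ err D1 f1 = err D1 f2 + 1 / 3 ∧
    ∃ C : ℝ, 0 < C ∧
      ∀ (k n : ℕ) (δ : ℝ), 0 < δ → δ < 1 → 7 ≤ k →
        C * Real.log (1 / δ) ≤ (n : ℝ) →
        1 - δ ≤
          ((bagMeasure D1 n k)
            {ω | empSQ f1 ω < empSQ f2 ω ∧
              ∀ g ∈ ({f1, f2} : Set (Fin 2 → Bool)),
                (∀ f ∈ ({f1, f2} : Set (Fin 2 → Bool)), empSQ g ω ≤ empSQ f ω) →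
                  g = f1}).toReal := by
  refine ⟨err_f1, err_f2, by rw [err_f1, err_f2]; norm_num, 2646, by norm_num, ?_⟩
  intro k n δ hδ0 hδ1 hk hn
  have hlog : 0 < Real.log (1/δ) := by
    apply Real.log_pos
    rw [lt_div_iff₀ hδ0]; linarith
  have hnpos : 0 < (n:ℝ) := lt_of_lt_of_le (by positivity) hn
  have hn0 : 0 < n := by exact_mod_cast hnpos
  classical
  set T : Set (Fin n → Fin k → Fin 2 × Bool) :=
    {ω | empSQ f1 ω < empSQ f2 ω ∧
      ∀ g ∈ ({f1, f2} : Set (Fin 2 → Bool)),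
        (∀ f ∈ ({f1, f2} : Set (Fin 2 → Bool)), empSQ g ω ≤ empSQ f ω) →
          g = f1} with hT
  set B : Set (Fin n → Fin k → Fin 2 × Bool) := {ω | ∑ i, Zb (ω i) ≤ 0} with hB
  have hsub : Bᶜ ⊆ T := by
    intro ω hω
    simp only [hB, Set.mem_compl_iff, Set.mem_setOf_eq, not_le] at hω
    have hlt : empSQ f1 ω < empSQ f2 ω := by
      have hdiff : empSQ f2 ω - empSQ f1 ω = (∑ i, Zb (ω i)) / n := by
        rw [empSQ, empSQ, div_sub_div_same, ← Finset.sum_sub_distrib]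
        rfl
      have hpos : 0 < (∑ i, Zb (ω i)) / (n:ℝ) := div_pos hω hnpos
      linarith
    refine ⟨hlt, ?_⟩
    intro g hg hmin
    rcases hg with rfl | hg
    · rfl
    · rw [Set.mem_singleton_iff] at hg; subst hg
      exact absurd (hmin f1 (Set.mem_insert _ _)) (not_le.mpr hlt)
  have hBmeas : ((bagMeasure D1 n k) B).toReal ≤ δ := by
    rw [bag_set_toReal]
    have hfs : B.toFinite.toFinset = Finset.univ.filter
        (fun ω : Fin n → Fin k → Fin 2 × Bool => ∑ i, Zb (ω i) ≤ 0) := by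
      ext ω; simp [hB]
    rw [hfs]
    refine le_trans (chernoff hk) ?_
    have h1 : (1 - 1/2646 : ℝ) ≤ Real.exp (-(1/2646)) := by
      have := Real.add_one_le_exp (-(1/2646):ℝ); linarith
    have h2 : ((1 - 1/2646 : ℝ))^n ≤ Real.exp (-(1/2646))^n :=
      pow_le_pow_left₀ (by norm_num) h1 n
    rw [← Real.exp_nat_mul] at h2
    refine h2.trans ?_
    have hlogd : Real.log (1/δ) = - Real.log δ := by rw [one_div, Real.log_inv]
    have h3 : ((n:ℝ) * -(1/2646)) ≤ Real.log δ := by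
      rw [hlogd] at hn; linarith
    calc Real.exp ((n:ℝ) * -(1/2646)) ≤ Real.exp (Real.log δ) := Real.exp_le_exp.mpr h3
      _ = δ := Real.exp_log hδ0
  have hBm : MeasurableSet B := B.to_countable.measurableSet
  have hcompl : ((bagMeasure D1 n k) Bᶜ).toReal = 1 - ((bagMeasure D1 n k) B).toReal := by
    rw [measure_compl hBm (measure_ne_top _ _), measure_univ,
      ENNReal.toReal_sub_of_le prob_le_one ENNReal.one_ne_top, ENNReal.toReal_one]
  have hmono : ((bagMeasure D1 n k) Bᶜ).toReal ≤ ((bagMeasure D1 n k) T).toReal :=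
    (ENNReal.toReal_le_toReal (measure_ne_top _ _) (measure_ne_top _ _)).mpr
      (measure_mono hsub)
  linarith


end LLP
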